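/- (Theorem 3.) Let S denote the positive semidefinite square root of the Gram matrix G = ΦᴴΦ, and let q be the number of distinct eigenvalues of G. Suppose there exist real constants a_1,…,a_q such that the diagonal entries satisfy (S^t)_{ii} = η_i · a_t for all 1 ≤ i ≤ m and all 1 ≤ t ≤ q. Then the equal-probability measurement is optimal: the constant vector p_i = λ_min is primal feasible and Σ_i η_i p'_i ≤ λ_min for every primal feasible p'. (The diagonal entries (S^t)_{ii} equal the quantities ⟨φ_i, (ΦΦᴴ)^{t/2−1} φ_i⟩ of the paper.) -/

import Mathlib

/-!
Weak duality gives `∑ η_i p_i ≤ Re tr X` for every primal feasible `p` and dual feasible `X`.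
The constant vector `λ_min` is primal feasible because, with `R = Φ G⁻¹` and `Π = Φ Rᴴ` the
projection onto the range of `Φ`, `1 - λ R Rᴴ = (1 - Π)ᴴ (1 - Π) + R (G - λ) Rᴴ`.
For a matching dual certificate let `P` be the spectral projection of `G = S²` onto its
`λ_min`-eigenspace. As `S` is invertible with at most `q` distinct eigenvalues, interpolation
writes `P = ∑ c_t S^(t+1)`, so the hypothesis gives `P_ii = η_i b` with `b = tr P > 0`. Then
`X = b⁻¹ Φ P Φᴴ` satisfies `tr (Q_i X) = b⁻¹ P_ii = η_i` and `tr X = b⁻¹ λ_min tr P = λ_min`.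
-/
open Matrix BigOperators ComplexOrder

noncomputable section

/-- The reciprocal states: columns of `Φ (ΦᴴΦ)⁻¹`. -/
def reciprocal {r m : ℕ} (Φ : Matrix (Fin r) (Fin m) ℂ) : Matrix (Fin r) (Fin m) ℂ :=
  Φ * (Φᴴ * Φ)⁻¹

/-- The rank-one operator `Q_i = φ̃_i φ̃_iᴴ`. -/
def Qop {r m : ℕ} (Φ : Matrix (Fin r) (Fin m) ℂ) (i : Fin m) : Matrix (Fin r) (Fin r) ℂ :=
  vecMulVec (fun a => reciprocal Φ a i) (fun b => star (reciprocal Φ b i))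

/-- `p` is primal feasible: `p_i ≥ 0` and `I - Σ p_i Q_i ⪰ 0`. -/
def PrimalFeasible {r m : ℕ} (Φ : Matrix (Fin r) (Fin m) ℂ) (p : Fin m → ℝ) : Prop :=
  (∀ i, 0 ≤ p i) ∧
    ((1 : Matrix (Fin r) (Fin r) ℂ) - ∑ i : Fin m, (p i : ℂ) • Qop Φ i).PosSemidef

/-- `(X, z)` is dual feasible: `X ⪰ 0`, `z_i ≥ 0` and `Re Tr(Q_i X) = η_i + z_i`. -/
def DualFeasible {r m : ℕ} (Φ : Matrix (Fin r) (Fin m) ℂ) (η : Fin m → ℝ)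
    (X : Matrix (Fin r) (Fin r) ℂ) (z : Fin m → ℝ) : Prop :=
  X.PosSemidef ∧ (∀ i, 0 ≤ z i) ∧ ∀ i, (Matrix.trace (Qop Φ i * X)).re = η i + z i

open scoped MatrixOrder

lemma exists_sum_mul_pow_succ_eqOn {K : Type*} [Field K] [DecidableEq K] {s : Finset K}
    (hs : 0 ∉ s) {q : ℕ} (hq : s.card ≤ q) (f : K → K) :
    ∃ c : Fin q → K, ∀ x ∈ s, ∑ t : Fin q, c t * x ^ (t.1 + 1) = f x := by
  set h := Lagrange.interpolate s id (fun x => f x / x) with hh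
  have hinj : Set.InjOn id (s : Set K) := Function.injective_id.injOn
  have hdeg : h.degree < q :=
    (Lagrange.degree_interpolate_lt _ hinj).trans_le (by exact_mod_cast hq)
  refine ⟨fun t => h.coeff t, fun x hx => ?_⟩
  have hx0 : x ≠ 0 := ne_of_mem_of_not_mem hx hs
  have hsum : ∑ t : Fin q, h.coeff t * x ^ (t : ℕ) = f x / x := by
    rw [Polynomial.sum_fin (fun i a => a * x ^ i) (by simp) hdeg, ← Polynomial.eval_eq_sum, hh]
    exact Lagrange.eval_interpolate_at_node (fun x => f x / x) hinj hx
  calc ∑ t : Fin q, h.coeff t * x ^ (t.1 + 1)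
      = x * ∑ t : Fin q, h.coeff t * x ^ (t : ℕ) := by
        rw [Finset.mul_sum]; exact Finset.sum_congr rfl fun t _ => by ring
    _ = f x := by rw [hsum, mul_div_cancel₀ _ hx0]

lemma exists_cfc_eq_sum_smul_pow_succ {A : Type*} {p : A → Prop} [Ring A] [StarRing A]
    [TopologicalSpace A] [Algebra ℝ A] [ContinuousFunctionalCalculus ℝ A p] {a : A}
    (ha : p a) (hfin : (spectrum ℝ a).Finite) (h0 : (0 : ℝ) ∉ spectrum ℝ a) {q : ℕ}
    (hq : (spectrum ℝ a).ncard ≤ q) (f : ℝ → ℝ) :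
    ∃ c : Fin q → ℝ, cfc f a = ∑ t : Fin q, c t • a ^ (t.1 + 1) := by
  classical
  obtain ⟨c, hc⟩ := exists_sum_mul_pow_succ_eqOn (s := hfin.toFinset) (by simpa using h0)
    (q := q) (by rwa [← Set.ncard_eq_toFinset_card _ hfin]) f
  refine ⟨c, ?_⟩
  have hfun : (fun x => ∑ t : Fin q, c t * x ^ (t.1 + 1))
      = ∑ t : Fin q, fun x => c t * x ^ (t.1 + 1) := by
    ext; simp
  rw [cfc_congr (fun x hx => (hc x (hfin.mem_toFinset.mpr hx)).symm), hfun,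
    cfc_sum_univ _ _ (fun _ => by fun_prop)]
  refine Finset.sum_congr rfl fun t _ => ?_
  rw [cfc_const_mul (c t) (· ^ (t.1 + 1)) a, cfc_pow_id a _ ha]

section Spectrum

variable {n : Type*} [Fintype n] [DecidableEq n]

lemma Matrix.mem_spectrum_of_mulVec_eq_smul {A : Matrix n n ℂ} {μ : ℂ} {u : n → ℂ} (hu : u ≠ 0)
    (hAu : A *ᵥ u = μ • u) : μ ∈ spectrum ℂ A := by
  rw [← spectrum_toLin', ← Module.End.hasEigenvalue_iff_mem_spectrum]
  exact Module.End.hasEigenvalue_of_hasEigenvector ⟨Module.End.mem_eigenspace_iff.mpr hAu, hu⟩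

lemma ncard_real_spectrum_le_of_posSemidef {S : Matrix n n ℂ} (hS : S.PosSemidef) :
    (spectrum ℝ S).ncard ≤ (spectrum ℂ (S * S)).ncard := by
  have hsa : IsSelfAdjoint S := hS.isHermitian
  have hsq : spectrum ℝ (S * S) = (· ^ 2) '' spectrum ℝ S := by
    rw [← pow_two, ← cfc_pow_id (R := ℝ) S 2, cfc_map_spectrum (R := ℝ) _ S]
  have hinj : Set.InjOn (· ^ 2 : ℝ → ℝ) (spectrum ℝ S) := fun x hx y hy hxy =>
    (pow_left_inj₀ (spectrum_nonneg_of_nonneg hS.nonneg hx)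
      (spectrum_nonneg_of_nonneg hS.nonneg hy) two_ne_zero).mp hxy
  calc (spectrum ℝ S).ncard = (spectrum ℝ (S * S)).ncard := by
        rw [hsq, hinj.ncard_image]
    _ ≤ (spectrum ℂ (S * S)).ncard := by
        rw [← spectrum.preimage_algebraMap ℂ]
        exact Set.ncard_le_ncard_of_injOn _ (fun _ hx => hx)
          (Complex.ofReal_injective.injOn) (S * S).finite_spectrum

lemma Matrix.PosSemidef.re_trace_mul_nonneg {B C : Matrix n n ℂ} (hB : B.PosSemidef)
    (hC : C.PosSemidef) : 0 ≤ (B * C).trace.re := by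
  obtain ⟨E, rfl⟩ := CStarAlgebra.nonneg_iff_eq_star_mul_self.mp hC.nonneg
  rw [star_eq_conjTranspose, trace_mul_comm, Matrix.mul_assoc, trace_mul_comm]
  exact (Complex.nonneg_iff.mp (hB.mul_mul_conjTranspose_same E).trace_nonneg).1

end Spectrum

lemma Matrix.PosSemidef.re_trace_pos {n : Type*} [Fintype n] {P : Matrix n n ℂ}
    (hP : P.PosSemidef) (hP0 : P ≠ 0) : 0 < P.trace.re := by
  obtain ⟨hre, him⟩ := Complex.nonneg_iff.mp hP.trace_nonneg
  exact hre.lt_of_ne fun h => hP0 (hP.trace_eq_zero_iff.mp (Complex.ext h.symm him.symm))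

section SqEigenprojection

variable {n : Type*} [Fintype n] [DecidableEq n]

/-- For Hermitian `S`, the orthogonal projection onto the `lam`-eigenspace of `S * S`. -/
def sqEigenprojection (S : Matrix n n ℂ) (lam : ℝ) : Matrix n n ℂ :=
  cfc (fun x : ℝ => if x ^ 2 = lam then 1 else 0) S

lemma sqEigenprojection_posSemidef (S : Matrix n n ℂ) (lam : ℝ) :
    (sqEigenprojection S lam).PosSemidef := by
  rw [← nonneg_iff_posSemidef]
  exact cfc_nonneg fun x _ => by split_ifs <;> norm_num

lemma sqEigenprojection_mul_sq {S : Matrix n n ℂ} (hS : S.IsHermitian) (lam : ℝ) :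
    sqEigenprojection S lam * (S * S) = (lam : ℂ) • sqEigenprojection S lam := by
  have hsa : IsSelfAdjoint S := hS
  have hc : ContinuousOn (fun x : ℝ => if x ^ 2 = lam then (1 : ℝ) else 0) (spectrum ℝ S) :=
    S.finite_real_spectrum.continuousOn _
  rw [sqEigenprojection, ← pow_two, ← cfc_pow_id (R := ℝ) S 2, ← cfc_mul _ _ S, Complex.coe_smul,
    ← cfc_const_mul _ _ S hc]
  congr 1
  ext x
  split_ifs with h <;> simp [h]

lemma sqEigenprojection_ne_zero {S : Matrix n n ℂ} (hS : S.IsHermitian) {lam : ℝ}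
    (hlam : lam ∈ spectrum ℝ (S * S)) : sqEigenprojection S lam ≠ 0 := by
  have hsa : IsSelfAdjoint S := hS
  rw [← pow_two, ← cfc_pow_id (R := ℝ) S 2, cfc_map_spectrum (R := ℝ) _ S] at hlam
  obtain ⟨x, hx, rfl⟩ := hlam
  intro h0
  rw [sqEigenprojection, ← cfc_zero ℝ S] at h0
  simpa using
    eqOn_of_cfc_eq_cfc h0 (S.finite_real_spectrum.continuousOn _) continuousOn_const hsa hx

end SqEigenprojection

section Reciprocal

variable {r m : ℕ} {Φ : Matrix (Fin r) (Fin m) ℂ}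

lemma conjTranspose_reciprocal (Φ : Matrix (Fin r) (Fin m) ℂ) :
    (reciprocal Φ)ᴴ = (Φᴴ * Φ)⁻¹ * Φᴴ := by
  rw [reciprocal, conjTranspose_mul, (isHermitian_conjTranspose_mul_self Φ).inv]

lemma conjTranspose_reciprocal_mul_self (hΦ : IsUnit (Φᴴ * Φ).det) :
    (reciprocal Φ)ᴴ * Φ = 1 := by
  rw [conjTranspose_reciprocal, Matrix.mul_assoc, nonsing_inv_mul _ hΦ]

lemma conjTranspose_mul_reciprocal (hΦ : IsUnit (Φᴴ * Φ).det) : Φᴴ * reciprocal Φ = 1 := by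
  rw [reciprocal, ← Matrix.mul_assoc, mul_nonsing_inv _ hΦ]

lemma reciprocal_mul_gram_mul_conjTranspose (hΦ : IsUnit (Φᴴ * Φ).det) :
    reciprocal Φ * (Φᴴ * Φ) * (reciprocal Φ)ᴴ = Φ * (reciprocal Φ)ᴴ := by
  rw [reciprocal, Matrix.mul_assoc Φ, nonsing_inv_mul _ hΦ, Matrix.mul_one]

lemma sum_Qop (Φ : Matrix (Fin r) (Fin m) ℂ) :
    ∑ i, Qop Φ i = reciprocal Φ * (reciprocal Φ)ᴴ := by
  ext a b
  simp [Qop, Matrix.sum_apply, mul_apply, vecMulVec_apply]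

lemma trace_Qop_mul (Φ : Matrix (Fin r) (Fin m) ℂ) (i : Fin m) (X : Matrix (Fin r) (Fin r) ℂ) :
    (Qop Φ i * X).trace = ((reciprocal Φ)ᴴ * X * reciprocal Φ) i i := by
  simp only [Qop, trace, diag, mul_apply, vecMulVec_apply, conjTranspose_apply, Finset.sum_mul]
  exact Finset.sum_congr rfl fun _ _ => Finset.sum_congr rfl fun _ _ => by ring

lemma conjTranspose_reciprocal_mul_conj_mul_reciprocal (hΦ : IsUnit (Φᴴ * Φ).det)
    (M : Matrix (Fin m) (Fin m) ℂ) :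
    (reciprocal Φ)ᴴ * (Φ * M * Φᴴ) * reciprocal Φ = M := by
  rw [← Matrix.mul_assoc, ← Matrix.mul_assoc, conjTranspose_reciprocal_mul_self hΦ,
    Matrix.one_mul, Matrix.mul_assoc, conjTranspose_mul_reciprocal hΦ, Matrix.mul_one]

lemma posSemidef_one_sub_smul_reciprocal_mul (hΦ : IsUnit (Φᴴ * Φ).det) {lam : ℝ}
    (hmin : (Φᴴ * Φ - (lam : ℂ) • 1).PosSemidef) :
    (1 - (lam : ℂ) • (reciprocal Φ * (reciprocal Φ)ᴴ)).PosSemidef := by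
  set proj := Φ * (reciprocal Φ)ᴴ with hproj
  have hproj_herm : projᴴ = proj := by
    rw [hproj, conjTranspose_mul, conjTranspose_conjTranspose, conjTranspose_reciprocal, reciprocal,
      Matrix.mul_assoc]
  have hproj_idem : proj * proj = proj := by
    rw [Matrix.mul_assoc, ← Matrix.mul_assoc _ Φ, conjTranspose_reciprocal_mul_self hΦ,
      Matrix.one_mul]
  have hdecomp : 1 - (lam : ℂ) • (reciprocal Φ * (reciprocal Φ)ᴴ)
      = (1 - proj)ᴴ * (1 - proj) + reciprocal Φ * (Φᴴ * Φ - (lam : ℂ) • 1) * (reciprocal Φ)ᴴ := by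
    rw [conjTranspose_sub, conjTranspose_one, hproj_herm, Matrix.mul_sub, Matrix.sub_mul,
      Matrix.sub_mul, Matrix.mul_one, Matrix.one_mul, hproj_idem, Matrix.mul_sub, Matrix.sub_mul,
      reciprocal_mul_gram_mul_conjTranspose hΦ, ← hproj]
    simp only [Matrix.mul_smul, Matrix.mul_one, Matrix.smul_mul]
    abel
  rw [hdecomp]
  exact (posSemidef_conjTranspose_mul_self _).add (hmin.mul_mul_conjTranspose_same _)

end Reciprocal

section Duality

variable {r m : ℕ} {Φ : Matrix (Fin r) (Fin m) ℂ}

lemma primalFeasible_const (hΦ : IsUnit (Φᴴ * Φ).det) {lam : ℝ} (hlam : 0 ≤ lam)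
    (hmin : (Φᴴ * Φ - (lam : ℂ) • 1).PosSemidef) : PrimalFeasible Φ (fun _ => lam) := by
  refine ⟨fun _ => hlam, ?_⟩
  rw [← Finset.smul_sum, sum_Qop]
  exact posSemidef_one_sub_smul_reciprocal_mul hΦ hmin

lemma PrimalFeasible.sum_mul_le_re_trace {p η z : Fin m → ℝ} {X : Matrix (Fin r) (Fin r) ℂ}
    (hp : PrimalFeasible Φ p) (hX : DualFeasible Φ η X z) :
    ∑ i, η i * p i ≤ X.trace.re := by
  obtain ⟨hp_nonneg, hp_psd⟩ := hp
  obtain ⟨hX_psd, hz, hQX⟩ := hX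
  have hpair : ((∑ i, (p i : ℂ) • Qop Φ i) * X).trace.re = ∑ i, p i * (η i + z i) := by
    simp only [Finset.sum_mul, trace_sum, Complex.re_sum, Matrix.smul_mul, trace_smul,
      smul_eq_mul, Complex.re_ofReal_mul, hQX]
  have hgap := hp_psd.re_trace_mul_nonneg hX_psd
  rw [Matrix.sub_mul, Matrix.one_mul, trace_sub, Complex.sub_re, hpair] at hgap
  calc ∑ i, η i * p i ≤ ∑ i, p i * (η i + z i) :=
        Finset.sum_le_sum fun i _ => by nlinarith [hp_nonneg i, hz i]
    _ ≤ X.trace.re := by linarith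

lemma dualFeasible_smul_conj (hΦ : IsUnit (Φᴴ * Φ).det) {η : Fin m → ℝ}
    {P : Matrix (Fin m) (Fin m) ℂ} (hP : P.PosSemidef) {β : ℝ} (hβ : 0 ≤ β)
    (hdiag : ∀ i, β * (P i i).re = η i) : DualFeasible Φ η (β • (Φ * P * Φᴴ)) 0 := by
  refine ⟨(hP.mul_mul_conjTranspose_same Φ).smul hβ, fun _ => le_rfl, fun i => ?_⟩
  rw [trace_Qop_mul, Matrix.mul_smul, Matrix.smul_mul,
    conjTranspose_reciprocal_mul_conj_mul_reciprocal hΦ, Matrix.smul_apply, Complex.real_smul,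
    Complex.re_ofReal_mul, hdiag, Pi.zero_apply, add_zero]

lemma trace_conj_of_mul_gram_eq_smul {P : Matrix (Fin m) (Fin m) ℂ} {lam : ℂ}
    (hP : P * (Φᴴ * Φ) = lam • P) : (Φ * P * Φᴴ).trace = lam * P.trace := by
  rw [trace_mul_comm, ← Matrix.mul_assoc, trace_mul_comm, hP, trace_smul, smul_eq_mul]

lemma exists_dualFeasible_trace_eq (hΦ : IsUnit (Φᴴ * Φ).det) {η : Fin m → ℝ}
    {P : Matrix (Fin m) (Fin m) ℂ} (hP : P.PosSemidef) {lam : ℝ}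
    (hPG : P * (Φᴴ * Φ) = (lam : ℂ) • P) {b : ℝ} (hb : 0 < b) (htr : P.trace = b)
    (hdiag : ∀ i, P i i = ((η i * b : ℝ) : ℂ)) :
    ∃ X, DualFeasible Φ η X 0 ∧ X.trace.re = lam := by
  refine ⟨b⁻¹ • (Φ * P * Φᴴ), dualFeasible_smul_conj hΦ hP (inv_nonneg.mpr hb.le) fun i => ?_, ?_⟩
  · rw [hdiag, Complex.ofReal_re]
    field_simp
  · rw [trace_smul, trace_conj_of_mul_gram_eq_smul hPG, htr, Complex.real_smul,
      ← Complex.ofReal_mul, ← Complex.ofReal_mul, Complex.ofReal_re]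
    field_simp

end Duality

lemma sum_smul_pow_succ_apply_self {n : Type*} [Fintype n] [DecidableEq n] {S : Matrix n n ℂ}
    {η : n → ℝ} {q : ℕ} {a : Fin q → ℝ}
    (ha : ∀ i (t : Fin q), (S ^ (t.1 + 1)) i i = ((η i * a t : ℝ) : ℂ)) (c : Fin q → ℝ) (i : n) :
    (∑ t, c t • S ^ (t.1 + 1)) i i = ((η i * ∑ t, c t * a t : ℝ) : ℂ) := by
  simp only [Matrix.sum_apply, Matrix.smul_apply, ha, Complex.real_smul, Finset.mul_sum]
  push_cast
  exact Finset.sum_congr rfl fun _ _ => by ring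

theorem stmt_12_general (m r : ℕ)
    (Φ : Matrix (Fin r) (Fin m) ℂ)
    (hind : LinearIndependent ℂ (fun i : Fin m => fun j : Fin r => Φ j i))
    (η : Fin m → ℝ) (hη1 : ∑ i : Fin m, η i = 1)
    (lam : ℝ)
    -- `lam` is the smallest eigenvalue of the Gram matrix `ΦᴴΦ`:
    (hev : ∃ u : Fin m → ℂ, u ≠ 0 ∧ (Φᴴ * Φ).mulVec u = (lam : ℂ) • u)
    (hmin : ((Φᴴ * Φ) - (lam : ℂ) • 1).PosSemidef)
    -- `S` is the positive semidefinite square root of the Gram matrix: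
    (S : Matrix (Fin m) (Fin m) ℂ) (hS : S.PosSemidef) (hSsq : S * S = Φᴴ * Φ)
    -- `q` is the number of distinct eigenvalues of the Gram matrix:
    (q : ℕ) (hq : q = (spectrum ℂ (Φᴴ * Φ)).ncard)
    (a : Fin q → ℝ)
    (ha : ∀ (i : Fin m) (t : Fin q), (S ^ (t.1 + 1)) i i = ((η i * a t : ℝ) : ℂ)) :
    PrimalFeasible Φ (fun _ => lam) ∧
      ∀ p' : Fin m → ℝ, PrimalFeasible Φ p' → ∑ i : Fin m, η i * p' i ≤ lam := by
  have hG : (Φᴴ * Φ).PosDef := .conjTranspose_mul_self Φ (mulVec_injective_iff.mpr hind)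
  have hGdet : IsUnit (Φᴴ * Φ).det := (isUnit_iff_isUnit_det _).mp hG.isUnit
  have hlam : lam ∈ spectrum ℝ (Φᴴ * Φ) := by
    obtain ⟨u, hu, hGu⟩ := hev
    exact (spectrum.algebraMap_mem_iff ℂ).mp (mem_spectrum_of_mulVec_eq_smul hu hGu)
  refine ⟨primalFeasible_const hGdet (spectrum_nonneg_of_nonneg hG.posSemidef.nonneg hlam) hmin,
    fun p hp => ?_⟩
  have hS0 : (0 : ℝ) ∉ spectrum ℝ S :=
    (spectrum.zero_notMem_iff ℝ).mpr (isUnit_of_mul_isUnit_left (hSsq ▸ hG.isUnit))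
  obtain ⟨c, hc⟩ := exists_cfc_eq_sum_smul_pow_succ hS.isHermitian.isSelfAdjoint
    S.finite_real_spectrum hS0 (hq ▸ hSsq ▸ ncard_real_spectrum_le_of_posSemidef hS)
    (fun x => if x ^ 2 = lam then 1 else 0)
  set P := sqEigenprojection S lam
  set b := ∑ t, c t * a t
  have hPdiag (i : Fin m) : P i i = ((η i * b : ℝ) : ℂ) := by
    rw [show P = _ from hc, sum_smul_pow_succ_apply_self ha]
  have htrP : P.trace = b := by
    simp only [trace, diag, hPdiag, ← Complex.ofReal_sum, ← Finset.sum_mul, hη1, one_mul]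
  have hP_psd : P.PosSemidef := sqEigenprojection_posSemidef S lam
  have hb : 0 < b := by
    simpa [htrP] using hP_psd.re_trace_pos (sqEigenprojection_ne_zero hS.isHermitian (hSsq ▸ hlam))
  obtain ⟨X, hX, htrX⟩ := exists_dualFeasible_trace_eq hGdet hP_psd
    (hSsq ▸ sqEigenprojection_mul_sq hS.isHermitian lam) hb htrP hPdiag
  exact htrX ▸ hp.sum_mul_le_re_trace hX

theorem stmt_12 (m r : ℕ) (hm : 0 < m) (hmr : m ≤ r)
    (Φ : Matrix (Fin r) (Fin m) ℂ)
    (hind : LinearIndependent ℂ (fun i : Fin m => fun j : Fin r => Φ j i))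
    (η : Fin m → ℝ) (hη : ∀ i, 0 ≤ η i) (hη1 : ∑ i : Fin m, η i = 1)
    (lam : ℝ)
    -- `lam` is the smallest eigenvalue of the Gram matrix `ΦᴴΦ`:
    (hev : ∃ u : Fin m → ℂ, u ≠ 0 ∧ (Φᴴ * Φ).mulVec u = (lam : ℂ) • u)
    (hmin : ((Φᴴ * Φ) - (lam : ℂ) • 1).PosSemidef)
    -- `S` is the positive semidefinite square root of the Gram matrix:
    (S : Matrix (Fin m) (Fin m) ℂ) (hS : S.PosSemidef) (hSsq : S * S = Φᴴ * Φ)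
    -- `q` is the number of distinct eigenvalues of the Gram matrix:
    (q : ℕ) (hq : q = (spectrum ℂ (Φᴴ * Φ)).ncard)
    (a : Fin q → ℝ)
    (ha : ∀ (i : Fin m) (t : Fin q), (S ^ (t.1 + 1)) i i = ((η i * a t : ℝ) : ℂ)) :
    PrimalFeasible Φ (fun _ => lam) ∧
      ∀ p' : Fin m → ℝ, PrimalFeasible Φ p' → ∑ i : Fin m, η i * p' i ≤ lam :=
  stmt_12_general m r Φ hind η hη1 lam hev hmin S hS hSsq q hq a ha
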